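/- arXiv:1502.06489 — 4 statements merged into one kernel-verified Lean document; each statement's English description precedes it below -/
import Mathlib

section
/- A bridging arc π[x_∂, y_∂′] of the annulus P_{g,h} is preprojective if and only if there exists an integer k with x ≤ k·g and y ≥ k·h. -/
/-- Shift the first entry of every point of `A` by `d` (well defined on arcs, since it
commutes with the deck transformations). -/
def shiftFst (d : ℤ) (A : Set (ℤ × ℤ)) : Set (ℤ × ℤ) := (fun p => (p.1 + d, p.2)) '' A

/-- Shift the second entry of every point of `A` by `d` (well defined on arcs). -/
def shiftSnd (d : ℤ) (A : Set (ℤ × ℤ)) : Set (ℤ × ℤ) := (fun p => (p.1, p.2 + d)) '' A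

/-- The bridging arc `π[x_∂, y_∂']` of the annulus `P_{g,h}`, from the outer boundary `∂`
to the inner boundary `∂'`: the orbit of `(x, y) ∈ ℤ × ℤ` under `σ·(x,y) = (x+g, y+h)`. -/
def orbPP (g h x y : ℤ) : Set (ℤ × ℤ) := {q : ℤ × ℤ | ∃ k : ℤ, q = (x + k * g, y + k * h)}

/-- Elementary moves between bridging arcs from `∂` to `∂'`:
`π[x_∂, y_∂'] → π[(x-1)_∂, y_∂']` and `π[x_∂, y_∂'] → π[x_∂, (y+1)_∂']`. -/
def elemPP (A B : Set (ℤ × ℤ)) : Prop := B = shiftFst (-1) A ∨ B = shiftSnd 1 A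

/-- A bridging arc from `∂` to `∂'` is preprojective if it can be reached from
`β_g = π[0_∂, 0_∂']` by a finite (possibly empty) sequence of elementary moves. -/
def IsPreproj (g h : ℤ) (A : Set (ℤ × ℤ)) : Prop :=
  Relation.ReflTransGen elemPP (orbPP g h 0 0) A

lemma shiftFst_orb (g h x y d : ℤ) : shiftFst d (orbPP g h x y) = orbPP g h (x + d) y := by
  ext ⟨a, b⟩
  simp only [shiftFst, Set.mem_image, orbPP, Set.mem_setOf_eq, Prod.mk.injEq, Prod.ext_iff]
  constructor
  · rintro ⟨⟨p, q⟩, ⟨k, hk1, hk2⟩, h1, h2⟩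
    exact ⟨k, by omega, by omega⟩
  · rintro ⟨k, h1, h2⟩
    exact ⟨(x + k * g, y + k * h), ⟨k, rfl, rfl⟩, by omega, by omega⟩

lemma shiftSnd_orb (g h x y d : ℤ) : shiftSnd d (orbPP g h x y) = orbPP g h x (y + d) := by
  ext ⟨a, b⟩
  simp only [shiftSnd, Set.mem_image, orbPP, Set.mem_setOf_eq, Prod.mk.injEq, Prod.ext_iff]
  constructor
  · rintro ⟨⟨p, q⟩, ⟨k, hk1, hk2⟩, h1, h2⟩
    exact ⟨k, by omega, by omega⟩
  · rintro ⟨k, h1, h2⟩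
    exact ⟨(x + k * g, y + k * h), ⟨k, rfl, rfl⟩, by omega, by omega⟩

lemma orb_shift (g h x y m : ℤ) : orbPP g h (x + m * g) (y + m * h) = orbPP g h x y := by
  ext ⟨a, b⟩
  simp only [orbPP, Set.mem_setOf_eq, Prod.mk.injEq, Prod.ext_iff]
  constructor
  · rintro ⟨k, h1, h2⟩
    exact ⟨m + k, by rw [h1]; ring, by rw [h2]; ring⟩
  · rintro ⟨k, h1, h2⟩
    exact ⟨k - m, by rw [h1]; ring, by rw [h2]; ring⟩

lemma reach_fst (g h x y : ℤ) (n : ℕ) :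
    Relation.ReflTransGen elemPP (orbPP g h x y) (orbPP g h (x - n) y) := by
  induction n with
  | zero => simpa using Relation.ReflTransGen.refl
  | succ n ih =>
    refine ih.tail (Or.inl ?_)
    rw [shiftFst_orb]; congr 1; push_cast; ring

lemma reach_snd (g h x y : ℤ) (n : ℕ) :
    Relation.ReflTransGen elemPP (orbPP g h x y) (orbPP g h x (y + n)) := by
  induction n with
  | zero => simpa using Relation.ReflTransGen.refl
  | succ n ih =>
    refine ih.tail (Or.inr ?_)
    rw [shiftSnd_orb]; congr 1; push_cast; ring

/-- a bridging arc `π[x_∂, y_∂']` of the annulus `P_{g,h}` is preprojective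
if and only if there exists an integer `k` with `x ≤ k·g` and `y ≥ k·h`. -/
theorem preprojective_iff (g h : ℤ) (hh : 1 ≤ h) (hgh : h ≤ g) (x y : ℤ) :
    IsPreproj g h (orbPP g h x y) ↔ ∃ k : ℤ, x ≤ k * g ∧ k * h ≤ y := by
  constructor
  · intro hp
    have inv : ∀ A, Relation.ReflTransGen elemPP (orbPP g h 0 0) A →
        ∃ x' y' k : ℤ, A = orbPP g h x' y' ∧ x' ≤ k * g ∧ k * h ≤ y' := by
      intro A hA
      induction hA with
      | refl => exact ⟨0, 0, 0, rfl, by simp, by simp⟩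
      | tail _ hbc ih =>
        obtain ⟨x', y', k, rfl, h1, h2⟩ := ih
        rcases hbc with rfl | rfl
        · exact ⟨x' - 1, y', k, by rw [shiftFst_orb]; ring_nf, by omega, h2⟩
        · exact ⟨x', y' + 1, k, by rw [shiftSnd_orb], h1, by omega⟩
    obtain ⟨x', y', k, hEq, h1, h2⟩ := inv _ hp
    have hmem : (x, y) ∈ orbPP g h x' y' := by
      rw [← hEq]; exact ⟨0, by simp⟩
    obtain ⟨m, hm⟩ := hmem
    rw [Prod.ext_iff] at hm
    obtain ⟨hm1, hm2⟩ := hm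
    simp only at hm1 hm2
    refine ⟨k + m, ?_, ?_⟩
    · rw [hm1]; nlinarith
    · rw [hm2]; nlinarith
  · rintro ⟨k, h1, h2⟩
    have base : orbPP g h 0 0 = orbPP g h (k * g) (k * h) := by
      rw [show k * g = 0 + k * g by ring, show k * h = 0 + k * h by ring, orb_shift]
    have n1 : ∃ n : ℕ, x = k * g - n := ⟨(k * g - x).toNat, by omega⟩
    have n2 : ∃ n : ℕ, y = k * h + n := ⟨(y - k * h).toNat, by omega⟩
    obtain ⟨n, rfl⟩ := n1
    obtain ⟨m, rfl⟩ := n2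
    unfold IsPreproj
    rw [base]
    exact (reach_fst g h (k * g) (k * h) n).trans (reach_snd g h (k * g - n) (k * h) m)
end

section
/- Let Q^P be the quiver with vertex set ℕ × {0,…,n} and arrows: for each r ∈ ℕ and 0 ≤ i ≤ g−1, an arrow (r, i+1) → (r, i) and an arrow (r, i) → (r+1, i+1); for each r ∈ ℕ and g ≤ i ≤ n, an arrow (r, i) → (r, i+1 mod (n+1)) and an arrow (r, i+1 mod (n+1)) → (r+1, i). Then the assignment F(τ^{−r}β_i) = (r, i) is a well-defined bijection from the set of preprojective arcs of P_{g,h} onto ℕ × {0,…,n}, and for any two preprojective arcs α, α′ the elementary moves from α to α′ are in bijection with the arrows from F(α) to F(α′) in Q^P; that is, F is an isomorphism from the quiver of preprojective arcs with elementary moves onto Q^P. -/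
/-- The preprojective arc `τ^{-r} β_i`: `π[(i-g-r)_∂, r_∂']` for `0 ≤ i ≤ g` and
`π[(-r)_∂, (i-g+r)_∂']` for `g < i ≤ n`. -/
def tauInvBetaArc (g h r i : ℤ) : Set (ℤ × ℤ) :=
  if i ≤ g then orbPP g h (i - g - r) r else orbPP g h (-r) (i - g + r)

open Classical in
/-- The number of elementary moves from the bridging arc `A` to the bridging arc `B`
(each arc from `∂` to `∂'` has exactly two elementary moves out of it, which may have the
same target). -/
noncomputable def ppMoveCount (A B : Set (ℤ × ℤ)) : ℕ :=
  (if B = shiftFst (-1) A then 1 else 0) + (if B = shiftSnd 1 A then 1 else 0)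

open Classical in
/-- The number of arrows from `v` to `w` in the quiver `Q^P` with vertex set
`ℕ × {0,…,n}` and arrows `(r, i+1) → (r, i)` and `(r, i) → (r+1, i+1)` for `0 ≤ i ≤ g-1`,
`(r, i) → (r, (i+1) % (n+1))` and `(r, (i+1) % (n+1)) → (r+1, i)` for `g ≤ i ≤ n`. -/
noncomputable def qpCount (g n : ℤ) (v w : ℤ × ℤ) : ℕ :=
  (if v.1 = w.1 ∧ 0 ≤ v.1 ∧ v.2 = w.2 + 1 ∧ 0 ≤ w.2 ∧ w.2 ≤ g - 1 then 1 else 0) +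
  (if w.1 = v.1 + 1 ∧ 0 ≤ v.1 ∧ w.2 = v.2 + 1 ∧ 0 ≤ v.2 ∧ v.2 ≤ g - 1 then 1 else 0) +
  (if v.1 = w.1 ∧ 0 ≤ v.1 ∧ g ≤ v.2 ∧ v.2 ≤ n ∧ w.2 = (v.2 + 1) % (n + 1) then 1 else 0) +
  (if w.1 = v.1 + 1 ∧ 0 ≤ v.1 ∧ g ≤ w.2 ∧ w.2 ≤ n ∧ v.2 = (w.2 + 1) % (n + 1) then 1 else 0)

/-!
Every arc is the orbit of a point of `ℤ × ℤ`; elementary moves change the coordinate sum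
`x + y` by one, while the deck transformation changes it by `g + h`. Hence any two orbits
compared below have representatives at most one deck transformation apart, and all
comparisons reduce to linear arithmetic. Surjectivity onto the preprojective arcs follows
because the arcs `τ^{-r} β_i` contain `β_g` and are closed under both elementary moves.
-/

lemma orbPP_eq_orbPP_iff {g h x y x' y' : ℤ} :
    orbPP g h x y = orbPP g h x' y' ↔ ∃ k : ℤ, x' = x + k * g ∧ y' = y + k * h := by
  constructor
  · intro hEq
    have hmem : (x', y') ∈ orbPP g h x y := hEq ▸ ⟨0, by simp⟩
    obtain ⟨k, hk⟩ := hmem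
    exact ⟨k, Prod.mk.inj hk⟩
  · rintro ⟨k, rfl, rfl⟩
    ext q
    constructor
    · rintro ⟨m, rfl⟩
      exact ⟨m - k, Prod.ext (by ring) (by ring)⟩
    · rintro ⟨m, rfl⟩
      exact ⟨m + k, Prod.ext (by ring) (by ring)⟩

lemma orbPP_eq_orbPP_iff_of_near {g h x y x' y' : ℤ} (hgh : 0 < g + h)
    (hle : x' + y' ≤ x + y + (g + h)) (hge : x + y ≤ x' + y' + (g + h)) :
    orbPP g h x y = orbPP g h x' y' ↔
      (x' = x ∧ y' = y) ∨ (x' = x + g ∧ y' = y + h) ∨ (x' = x - g ∧ y' = y - h) := by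
  rw [orbPP_eq_orbPP_iff]
  constructor
  · rintro ⟨k, rfl, rfl⟩
    have hk₁ : k ≤ 1 := le_of_mul_le_mul_right (by linarith) hgh
    have hk₂ : -1 ≤ k := le_of_mul_le_mul_right (by linarith) hgh
    interval_cases k <;> omega
  · rintro (⟨rfl, rfl⟩ | ⟨rfl, rfl⟩ | ⟨rfl, rfl⟩)
    exacts [⟨0, by ring, by ring⟩, ⟨1, by ring, by ring⟩, ⟨-1, by ring, by ring⟩]

lemma shiftFst_orbPP (d g h x y : ℤ) : shiftFst d (orbPP g h x y) = orbPP g h (x + d) y := by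
  ext q
  constructor
  · rintro ⟨_, ⟨k, rfl⟩, rfl⟩
    exact ⟨k, Prod.ext (by ring) (by ring)⟩
  · rintro ⟨k, rfl⟩
    exact ⟨_, ⟨k, rfl⟩, Prod.ext (by ring) (by ring)⟩

lemma shiftSnd_orbPP (d g h x y : ℤ) : shiftSnd d (orbPP g h x y) = orbPP g h x (y + d) := by
  ext q
  constructor
  · rintro ⟨_, ⟨k, rfl⟩, rfl⟩
    exact ⟨k, Prod.ext (by ring) (by ring)⟩
  · rintro ⟨k, rfl⟩
    exact ⟨_, ⟨k, rfl⟩, Prod.ext (by ring) (by ring)⟩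

lemma isPreproj_orbPP {g h x y : ℤ} (hx : x ≤ 0) (hy : 0 ≤ y) :
    IsPreproj g h (orbPP g h x y) := by
  induction x, hx using Int.leInductionDown with
  | base =>
    induction y, hy using Int.leInduction with
    | base => exact .refl
    | succ y _ ih => exact ih.tail (Or.inr (shiftSnd_orbPP ..).symm)
  | pred x _ ih => exact ih.tail (Or.inl (shiftFst_orbPP ..).symm)

lemma add_one_emod_add_one_cases {i n : ℤ} (hi : 0 ≤ i) (hin : i ≤ n) :
    (i < n ∧ (i + 1) % (n + 1) = i + 1) ∨ (i = n ∧ (i + 1) % (n + 1) = 0) := by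
  rcases hin.lt_or_eq with hlt | rfl
  · exact .inl ⟨hlt, Int.emod_eq_of_lt (by omega) (by omega)⟩
  · exact .inr ⟨rfl, Int.emod_self⟩

lemma ite_or_eq_add {P Q : Prop} [Decidable P] [Decidable Q] [Decidable (P ∨ Q)] (h : ¬(P ∧ Q)) :
    (if P ∨ Q then 1 else 0 : ℕ) = (if P then 1 else 0) + (if Q then 1 else 0) := by
  split_ifs <;> tauto

section Preprojective

variable {g h n r i s j : ℤ}

lemma isPreproj_tauInvBetaArc (hr : 0 ≤ r) : IsPreproj g h (tauInvBetaArc g h r i) := by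
  unfold tauInvBetaArc
  split_ifs
  · exact isPreproj_orbPP (by omega) hr
  · exact isPreproj_orbPP (by omega) (by omega)

lemma eq_of_tauInvBetaArc_eq (hn : n = g + h - 1) (hi : 0 ≤ i) (hin : i ≤ n) (hj : 0 ≤ j)
    (hjn : j ≤ n) (heq : tauInvBetaArc g h r i = tauInvBetaArc g h s j) : r = s ∧ i = j := by
  unfold tauInvBetaArc at heq
  split_ifs at heq <;>
    rw [orbPP_eq_orbPP_iff_of_near (by omega) (by omega) (by omega)] at heq <;> omega

variable (hg : 0 ≤ g) (hh : 1 ≤ h) (hn : n = g + h - 1)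
include hg hh hn

lemma tauInvBetaArc_eq_shiftFst_iff (hr : 0 ≤ r) (hi : 0 ≤ i) (hin : i ≤ n) (hj : 0 ≤ j)
    (hjn : j ≤ n) :
    tauInvBetaArc g h s j = shiftFst (-1) (tauInvBetaArc g h r i) ↔
      (r = s ∧ 0 ≤ r ∧ i = j + 1 ∧ 0 ≤ j ∧ j ≤ g - 1) ∨
      (s = r + 1 ∧ 0 ≤ r ∧ g ≤ j ∧ j ≤ n ∧ i = (j + 1) % (n + 1)) := by
  have hmod := add_one_emod_add_one_cases hj hjn
  unfold tauInvBetaArc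
  split_ifs <;>
    rw [shiftFst_orbPP, eq_comm, orbPP_eq_orbPP_iff_of_near (by omega) (by omega) (by omega)] <;>
    omega

lemma tauInvBetaArc_eq_shiftSnd_iff (hr : 0 ≤ r) (hi : 0 ≤ i) (hin : i ≤ n) (hj : 0 ≤ j)
    (hjn : j ≤ n) :
    tauInvBetaArc g h s j = shiftSnd 1 (tauInvBetaArc g h r i) ↔
      (s = r + 1 ∧ 0 ≤ r ∧ j = i + 1 ∧ 0 ≤ i ∧ i ≤ g - 1) ∨
      (r = s ∧ 0 ≤ r ∧ g ≤ i ∧ i ≤ n ∧ j = (i + 1) % (n + 1)) := by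
  have hmod := add_one_emod_add_one_cases hi hin
  unfold tauInvBetaArc
  split_ifs <;>
    rw [shiftSnd_orbPP, eq_comm, orbPP_eq_orbPP_iff_of_near (by omega) (by omega) (by omega)] <;>
    omega

lemma exists_tauInvBetaArc_eq_shiftFst (hr : 0 ≤ r) (hi : 0 ≤ i) (hin : i ≤ n) :
    ∃ s j, 0 ≤ s ∧ 0 ≤ j ∧ j ≤ n ∧
      tauInvBetaArc g h s j = shiftFst (-1) (tauInvBetaArc g h r i) := by
  obtain ⟨s, j, hs, hj, hjn, hmove⟩ : ∃ s j, 0 ≤ s ∧ 0 ≤ j ∧ j ≤ n ∧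
      ((r = s ∧ 0 ≤ r ∧ i = j + 1 ∧ 0 ≤ j ∧ j ≤ g - 1) ∨
        (s = r + 1 ∧ 0 ≤ r ∧ g ≤ j ∧ j ≤ n ∧ i = (j + 1) % (n + 1))) := by
    rcases (show i = 0 ∨ (0 < i ∧ i ≤ g) ∨ g < i by omega) with rfl | hle | hlt
    · have := add_one_emod_add_one_cases (i := n) (by omega) le_rfl
      exact ⟨r + 1, n, by omega, by omega, le_rfl, by omega⟩
    · exact ⟨r, i - 1, hr, by omega, by omega, by omega⟩
    · have := add_one_emod_add_one_cases (i := i - 1) (n := n) (by omega) (by omega)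
      exact ⟨r + 1, i - 1, by omega, by omega, by omega, by omega⟩
  exact ⟨s, j, hs, hj, hjn, (tauInvBetaArc_eq_shiftFst_iff hg hh hn hr hi hin hj hjn).2 hmove⟩

lemma exists_tauInvBetaArc_eq_shiftSnd (hr : 0 ≤ r) (hi : 0 ≤ i) (hin : i ≤ n) :
    ∃ s j, 0 ≤ s ∧ 0 ≤ j ∧ j ≤ n ∧
      tauInvBetaArc g h s j = shiftSnd 1 (tauInvBetaArc g h r i) := by
  have := add_one_emod_add_one_cases hi hin
  obtain ⟨s, j, hs, hj, hjn, hmove⟩ : ∃ s j, 0 ≤ s ∧ 0 ≤ j ∧ j ≤ n ∧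
      ((s = r + 1 ∧ 0 ≤ r ∧ j = i + 1 ∧ 0 ≤ i ∧ i ≤ g - 1) ∨
        (r = s ∧ 0 ≤ r ∧ g ≤ i ∧ i ≤ n ∧ j = (i + 1) % (n + 1))) := by
    rcases lt_or_ge i g with hlt | hle
    · exact ⟨r + 1, i + 1, by omega, by omega, by omega, by omega⟩
    · exact ⟨r, (i + 1) % (n + 1), hr, by omega, by omega, by omega⟩
  exact ⟨s, j, hs, hj, hjn, (tauInvBetaArc_eq_shiftSnd_iff hg hh hn hr hi hin hj hjn).2 hmove⟩

lemma IsPreproj.exists_tauInvBetaArc_eq {A : Set (ℤ × ℤ)} (hA : IsPreproj g h A) :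
    ∃ r i, 0 ≤ r ∧ 0 ≤ i ∧ i ≤ n ∧ tauInvBetaArc g h r i = A := by
  induction hA with
  | refl => exact ⟨0, g, le_rfl, hg, by omega, by simp [tauInvBetaArc]⟩
  | tail _ hmove ih =>
    obtain ⟨r, i, hr, hi, hin, rfl⟩ := ih
    rcases hmove with rfl | rfl
    exacts [exists_tauInvBetaArc_eq_shiftFst hg hh hn hr hi hin,
      exists_tauInvBetaArc_eq_shiftSnd hg hh hn hr hi hin]

lemma ppMoveCount_tauInvBetaArc (hr : 0 ≤ r) (hi : 0 ≤ i) (hin : i ≤ n) (hj : 0 ≤ j)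
    (hjn : j ≤ n) :
    ppMoveCount (tauInvBetaArc g h r i) (tauInvBetaArc g h s j) = qpCount g n (r, i) (s, j) := by
  simp only [ppMoveCount, qpCount, tauInvBetaArc_eq_shiftFst_iff hg hh hn hr hi hin hj hjn,
    tauInvBetaArc_eq_shiftSnd_iff hg hh hn hr hi hin hj hjn]
  rw [ite_or_eq_add (by omega), ite_or_eq_add (by omega)]
  ring

end Preprojective

/-- the map `F(τ^{-r} β_i) = (r, i)` is a well-defined bijection from the
preprojective arcs of `P_{g,h}` onto `ℕ × {0,…,n}`, and for any two preprojective arcs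
`α`, `α'` the elementary moves from `α` to `α'` are in bijection with the arrows from
`F(α)` to `F(α')` in `Q^P`.  Equivalently, the inverse parametrization
`(r, i) ↦ τ^{-r} β_i` is a bijection from `{(r,i) : r ≥ 0, 0 ≤ i ≤ n}` onto the set of
preprojective arcs which matches the number of arrows between any two vertices. -/
theorem preprojective_quiver_iso (g h n : ℤ) (hh : 1 ≤ h) (hgh : h ≤ g)
    (hn : n = g + h - 1) :
    Set.BijOn (fun p : ℤ × ℤ => tauInvBetaArc g h p.1 p.2)
      {p : ℤ × ℤ | 0 ≤ p.1 ∧ 0 ≤ p.2 ∧ p.2 ≤ n} {A | IsPreproj g h A} ∧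
    (∀ p ∈ {p : ℤ × ℤ | 0 ≤ p.1 ∧ 0 ≤ p.2 ∧ p.2 ≤ n},
     ∀ q ∈ {p : ℤ × ℤ | 0 ≤ p.1 ∧ 0 ≤ p.2 ∧ p.2 ≤ n},
      ppMoveCount (tauInvBetaArc g h p.1 p.2) (tauInvBetaArc g h q.1 q.2)
        = qpCount g n p q) := by
  have hg : 0 ≤ g := by omega
  refine ⟨⟨?_, ?_, ?_⟩, ?_⟩
  · rintro ⟨r, i⟩ ⟨hr, -, -⟩
    exact isPreproj_tauInvBetaArc hr
  · rintro ⟨r, i⟩ ⟨-, hi, hin⟩ ⟨s, j⟩ ⟨-, hj, hjn⟩ heq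
    obtain ⟨rfl, rfl⟩ := eq_of_tauInvBetaArc_eq hn hi hin hj hjn heq
    rfl
  · intro A hA
    obtain ⟨r, i, hr, hi, hin, rfl⟩ := IsPreproj.exists_tauInvBetaArc_eq hg hh hn hA
    exact ⟨(r, i), ⟨hr, hi, hin⟩, rfl⟩
  · rintro ⟨r, i⟩ ⟨hr, hi, hin⟩ ⟨s, j⟩ ⟨-, hj, hjn⟩
    exact ppMoveCount_tauInvBetaArc hg hh hn hr hi hin hj hjn
end

section
/- A bridging arc π[j_∂′, x_∂] of the annulus P_{g,h} is preinjective if and only if there exists an integer k with j ≤ k·h − 2 and x ≥ (k−1)·g + 2. -/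
/-- The bridging arc `π[j_∂', x_∂]` of the annulus `P_{g,h}`, from the inner boundary `∂'`
to the outer boundary `∂`: the orbit of `(j, x) ∈ ℤ × ℤ` under `σ·(j,x) = (j+h, x+g)`. -/
def orbPI (g h j x : ℤ) : Set (ℤ × ℤ) := {q : ℤ × ℤ | ∃ k : ℤ, q = (j + k * h, x + k * g)}

/-- Elementary moves between bridging arcs from `∂'` to `∂`:
`π[j_∂', x_∂] → π[(j+1)_∂', x_∂]` and `π[j_∂', x_∂] → π[j_∂', (x-1)_∂]`. -/
def elemPI (A B : Set (ℤ × ℤ)) : Prop := B = shiftFst 1 A ∨ B = shiftSnd (-1) A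

/-- The injective arcs: `γ_i = π[(-2)_∂', (i-g+2)_∂]` for `0 ≤ i ≤ g` and
`γ_i = π[(i-g-2)_∂', 2_∂]` for `g < i ≤ n`. -/
def gammaArc (g h i : ℤ) : Set (ℤ × ℤ) :=
  if i ≤ g then orbPI g h (-2) (i - g + 2) else orbPI g h (i - g - 2) 2

/-- A bridging arc from `∂'` to `∂` is preinjective if `γ_0` can be reached from it by a
finite (possibly empty) sequence of elementary moves. -/
def IsPreinj (g h : ℤ) (A : Set (ℤ × ℤ)) : Prop :=
  Relation.ReflTransGen elemPI A (gammaArc g h 0)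

/-! Elementary moves act on representatives `(j, x)` of an arc by `j ↦ j + 1` and `x ↦ x - 1`,
so an arc can reach another exactly when some lift `(j', x')` of the target satisfies
`j ≤ j'` and `x' ≤ x`. The lifts of `γ₀ = π[(-2)_∂', (2-g)_∂]` are `(k h - 2, (k-1) g + 2)`. -/

section Orbit

variable {g h : ℤ}

lemma mem_orbPI_self (j x : ℤ) : (j, x) ∈ orbPI g h j x := ⟨0, by simp⟩

lemma orbPI_add_mul (j x k : ℤ) : orbPI g h (j + k * h) (x + k * g) = orbPI g h j x := by
  ext q
  constructor
  · rintro ⟨m, rfl⟩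
    exact ⟨k + m, Prod.ext (by ring) (by ring)⟩
  · rintro ⟨m, rfl⟩
    exact ⟨m - k, Prod.ext (by ring) (by ring)⟩

lemma orbPI_eq_orbPI_iff {j x j' x' : ℤ} :
    orbPI g h j x = orbPI g h j' x' ↔ ∃ k : ℤ, j = j' + k * h ∧ x = x' + k * g := by
  constructor
  · intro hEq
    obtain ⟨k, hk⟩ : (j, x) ∈ orbPI g h j' x' := hEq ▸ mem_orbPI_self j x
    exact ⟨k, Prod.ext_iff.mp hk⟩
  · rintro ⟨k, rfl, rfl⟩
    exact orbPI_add_mul j' x' k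

lemma shiftFst_orbPI (d j x : ℤ) : shiftFst d (orbPI g h j x) = orbPI g h (j + d) x := by
  ext ⟨a, b⟩
  constructor
  · rintro ⟨_, ⟨k, rfl⟩, hp⟩
    exact ⟨k, hp ▸ Prod.ext (by ring) rfl⟩
  · rintro ⟨k, hk⟩
    exact ⟨(j + k * h, x + k * g), ⟨k, rfl⟩, hk ▸ Prod.ext (by ring) rfl⟩

lemma shiftSnd_orbPI (d j x : ℤ) : shiftSnd d (orbPI g h j x) = orbPI g h j (x + d) := by
  ext ⟨a, b⟩
  constructor
  · rintro ⟨_, ⟨k, rfl⟩, hp⟩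
    exact ⟨k, hp ▸ Prod.ext rfl (by ring)⟩
  · rintro ⟨k, hk⟩
    exact ⟨(j + k * h, x + k * g), ⟨k, rfl⟩, hk ▸ Prod.ext rfl (by ring)⟩

lemma gammaArc_zero (hg : 0 ≤ g) : gammaArc g h 0 = orbPI g h (-2) (2 - g) := by
  rw [gammaArc, if_pos hg, zero_sub, neg_add_eq_sub]

lemma reflTransGen_elemPI_orbPI_fst {j j' : ℤ} (x : ℤ) (hj : j ≤ j') :
    Relation.ReflTransGen elemPI (orbPI g h j x) (orbPI g h j' x) := by
  induction j', hj using Int.leInduction with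
  | base => rfl
  | succ n _ ih => exact ih.tail (Or.inl (shiftFst_orbPI 1 n x).symm)

lemma reflTransGen_elemPI_orbPI_snd (j : ℤ) {x x' : ℤ} (hx : x' ≤ x) :
    Relation.ReflTransGen elemPI (orbPI g h j x) (orbPI g h j x') := by
  induction x', hx using Int.leInductionDown with
  | base => rfl
  | pred n _ ih => exact ih.tail (Or.inr (shiftSnd_orbPI (-1) j n).symm)

lemma exists_orbPI_of_reflTransGen_elemPI {j x : ℤ} {B : Set (ℤ × ℤ)}
    (hB : Relation.ReflTransGen elemPI (orbPI g h j x) B) :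
    ∃ j' x', j ≤ j' ∧ x' ≤ x ∧ B = orbPI g h j' x' := by
  induction hB with
  | refl => exact ⟨j, x, le_rfl, le_rfl, rfl⟩
  | tail _ hstep ih =>
    obtain ⟨j', x', hj, hx, rfl⟩ := ih
    rcases hstep with rfl | rfl
    · exact ⟨j' + 1, x', by omega, hx, shiftFst_orbPI 1 j' x'⟩
    · exact ⟨j', x' + -1, hj, by omega, shiftSnd_orbPI (-1) j' x'⟩

lemma reflTransGen_elemPI_orbPI_iff {j x j' x' : ℤ} :
    Relation.ReflTransGen elemPI (orbPI g h j x) (orbPI g h j' x') ↔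
      ∃ k : ℤ, j ≤ j' + k * h ∧ x' + k * g ≤ x := by
  constructor
  · intro hreach
    obtain ⟨j'', x'', hj, hx, hEq⟩ := exists_orbPI_of_reflTransGen_elemPI hreach
    obtain ⟨k, rfl, rfl⟩ := orbPI_eq_orbPI_iff.mp hEq.symm
    exact ⟨k, hj, hx⟩
  · rintro ⟨k, hj, hx⟩
    rw [← orbPI_add_mul j' x' k]
    exact (reflTransGen_elemPI_orbPI_fst x hj).trans (reflTransGen_elemPI_orbPI_snd _ hx)

end Orbit

/-- a bridging arc `π[j_∂', x_∂]` of the annulus `P_{g,h}` is preinjective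
if and only if there exists an integer `k` with `j ≤ k·h - 2` and `x ≥ (k-1)·g + 2`. -/
theorem preinjective_iff (g h : ℤ) (hh : 1 ≤ h) (hgh : h ≤ g) (j x : ℤ) :
    IsPreinj g h (orbPI g h j x) ↔ ∃ k : ℤ, j ≤ k * h - 2 ∧ (k - 1) * g + 2 ≤ x := by
  have hlift (k : ℤ) : 2 - g + k * g = (k - 1) * g + 2 := by ring
  rw [IsPreinj, gammaArc_zero (by omega), reflTransGen_elemPI_orbPI_iff]
  simp only [neg_add_eq_sub, hlift]
end

section
/- Let Q^0 be the quiver with vertex set ℕ × {1,…,g} and, for each r ∈ ℕ and 1 ≤ s ≤ g, an arrow ρ(r,s): (r, s) → (r+1, s) and an arrow π(r,s): (r+1, s⊕1) → (r, s), where s⊕1 denotes s+1 if s < g and 1 if s = g. Then the assignment F(π[i_∂, j_∂]) = (j−i−2, s), where s ∈ {1,…,g} is the unique element with s ≡ j (mod g), is a well-defined bijection from the set of peripheral arcs at the outer boundary of P_{g,h} onto ℕ × {1,…,g}, and for any two peripheral arcs α, α′ at ∂ the elementary moves from α to α′ are in bijection with the arrows from F(α) to F(α′) in Q^0; that is, F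 is an isomorphism from the quiver of peripheral arcs at ∂ with elementary moves onto the tube quiver Q^0 of rank g. -/
/-- The peripheral arc `π[i, j]` with period `c` (`c = g` at the outer boundary `∂`,
`c = h` at the inner boundary `∂'`): the orbit of `(i, j) ∈ ℤ × ℤ` (with `j ≥ i + 2`)
under the shift `σ·(i,j) = (i+c, j+c)`. -/
def orbPer (c i j : ℤ) : Set (ℤ × ℤ) := {q : ℤ × ℤ | ∃ k : ℤ, q = (i + k * c, j + k * c)}

/-- Peripheral arcs at the outer boundary `∂` of `P_{g,h}`. -/
def IsPerOut (g : ℤ) (A : Set (ℤ × ℤ)) : Prop := ∃ i j : ℤ, i + 2 ≤ j ∧ A = orbPer g i j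

open Classical in
/-- The number of elementary moves from the peripheral arc `A` at `∂` to the arc `B`:
the lengthening move `π[i_∂, j_∂] → π[(i-1)_∂, j_∂]` always exists, the shortening move
`π[i_∂, j_∂] → π[i_∂, (j-1)_∂]` only when its target is still a peripheral arc. -/
noncomputable def perOutMoveCount (g : ℤ) (A B : Set (ℤ × ℤ)) : ℕ :=
  (if B = shiftFst (-1) A then 1 else 0) +
  (if IsPerOut g (shiftSnd (-1) A) ∧ B = shiftSnd (-1) A then 1 else 0)

open Classical in
/-- The number of arrows from `v` to `w` in the tube quiver `Q^0` of rank `g`, with vertex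
set `ℕ × {1,…,g}` and arrows `ρ(r,s) : (r,s) → (r+1,s)` and `π(r,s) : (r+1, s⊕1) → (r,s)`,
where `s⊕1 = s+1` if `s < g` and `= 1` if `s = g`. -/
noncomputable def q0Count (g : ℤ) (v w : ℤ × ℤ) : ℕ :=
  (if w.1 = v.1 + 1 ∧ 0 ≤ v.1 ∧ w.2 = v.2 ∧ 1 ≤ v.2 ∧ v.2 ≤ g then 1 else 0) +
  (if v.1 = w.1 + 1 ∧ 0 ≤ w.1 ∧ 1 ≤ w.2 ∧ w.2 ≤ g ∧
      v.2 = (if w.2 < g then w.2 + 1 else 1) then 1 else 0)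

lemma orbPer_eq_iff (g i j i' j' : ℤ) :
    orbPer g i j = orbPer g i' j' ↔ ∃ k : ℤ, i' = i + k * g ∧ j' = j + k * g := by
  constructor
  · intro hEq
    have h0 : (i', j') ∈ orbPer g i' j' := ⟨0, by simp⟩
    rw [← hEq] at h0
    obtain ⟨k, hk⟩ := h0
    simp only [Prod.mk.injEq] at hk
    exact ⟨k, hk⟩
  · rintro ⟨k, rfl, rfl⟩
    ext ⟨a, b⟩
    simp only [orbPer, Set.mem_setOf_eq, Prod.mk.injEq]
    constructor
    · rintro ⟨m, h1, h2⟩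
      exact ⟨m - k, by rw [h1]; ring, by rw [h2]; ring⟩
    · rintro ⟨m, h1, h2⟩
      exact ⟨k + m, by rw [h1]; ring, by rw [h2]; ring⟩

lemma shiftFst_orbPer (d g i j : ℤ) : shiftFst d (orbPer g i j) = orbPer g (i + d) j := by
  ext ⟨a, b⟩
  simp only [shiftFst, Set.mem_image, orbPer, Set.mem_setOf_eq, Prod.mk.injEq, Prod.exists]
  constructor
  · rintro ⟨x, y, ⟨k, hk1, hk2⟩, h1, h2⟩
    exact ⟨k, by rw [← h1, hk1]; ring, by rw [← h2, hk2]⟩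
  · rintro ⟨k, h1, h2⟩
    exact ⟨i + k * g, j + k * g, ⟨k, rfl, rfl⟩, by rw [h1]; ring, h2.symm⟩

lemma shiftSnd_orbPer (d g i j : ℤ) : shiftSnd d (orbPer g i j) = orbPer g i (j + d) := by
  ext ⟨a, b⟩
  simp only [shiftSnd, Set.mem_image, orbPer, Set.mem_setOf_eq, Prod.mk.injEq, Prod.exists]
  constructor
  · rintro ⟨x, y, ⟨k, hk1, hk2⟩, h1, h2⟩
    exact ⟨k, by rw [← h1, hk1], by rw [← h2, hk2]; ring⟩
  · rintro ⟨k, h1, h2⟩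
    exact ⟨i + k * g, j + k * g, ⟨k, rfl, rfl⟩, h1.symm, by rw [h2]; ring⟩

lemma k_eq_zero {g s s' k : ℤ} (hg : 0 < g) (hs1 : 1 ≤ s) (hs2 : s ≤ g)
    (hs1' : 1 ≤ s') (hs2' : s' ≤ g) (hk : s' = s + k * g) : k = 0 := by
  rcases lt_trichotomy k 0 with hc | hc | hc
  · have h1 : k * g ≤ -1 * g := mul_le_mul_of_nonneg_right (by omega) hg.le
    linarith
  · exact hc
  · have h1 : 1 * g ≤ k * g := mul_le_mul_of_nonneg_right (by omega) hg.le
    linarith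

lemma k_zero_one {g s s' k : ℤ} (hg : 0 < g) (hs1 : 1 ≤ s) (hs2 : s ≤ g)
    (hs1' : 1 ≤ s') (hs2' : s' ≤ g) (hk : s' = s - 1 + k * g) : k = 0 ∨ k = 1 := by
  rcases lt_trichotomy k 0 with hc | hc | hc
  · have h1 : k * g ≤ -1 * g := mul_le_mul_of_nonneg_right (by omega) hg.le
    linarith
  · exact Or.inl hc
  · rcases eq_or_lt_of_le (show (1:ℤ) ≤ k by omega) with hc2 | hc2
    · exact Or.inr hc2.symm
    · have h1 : 2 * g ≤ k * g := mul_le_mul_of_nonneg_right (by omega) hg.le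
      linarith

/-- the map `F(π[i_∂, j_∂]) = (j-i-2, s)` with `1 ≤ s ≤ g`, `s ≡ j (mod g)`,
is a well-defined bijection from the peripheral arcs at the outer boundary of `P_{g,h}`
onto `ℕ × {1,…,g}` matching elementary moves with the arrows of the tube quiver `Q^0` of
rank `g`.  Equivalently the inverse parametrization `(r,s) ↦ π[(s-r-2)_∂, s_∂]` is a
bijection matching the arrow counts, and `F` is given by the stated formula. -/
theorem tube_outer_iso (g h : ℤ) (hh : 1 ≤ h) (hgh : h ≤ g) :
    Set.BijOn (fun p : ℤ × ℤ => orbPer g (p.2 - p.1 - 2) p.2)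
      {p : ℤ × ℤ | 0 ≤ p.1 ∧ 1 ≤ p.2 ∧ p.2 ≤ g} {A | IsPerOut g A} ∧
    (∀ i j s : ℤ, i + 2 ≤ j → 1 ≤ s → s ≤ g → g ∣ j - s →
      orbPer g i j = orbPer g (s - (j - i - 2) - 2) s) ∧
    (∀ p ∈ {p : ℤ × ℤ | 0 ≤ p.1 ∧ 1 ≤ p.2 ∧ p.2 ≤ g},
     ∀ q ∈ {p : ℤ × ℤ | 0 ≤ p.1 ∧ 1 ≤ p.2 ∧ p.2 ≤ g},
      perOutMoveCount g (orbPer g (p.2 - p.1 - 2) p.2) (orbPer g (q.2 - q.1 - 2) q.2)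
        = q0Count g p q) := by
  have hg : 0 < g := by linarith
  refine ⟨⟨?_, ?_, ?_⟩, ?_, ?_⟩
  · -- MapsTo
    rintro ⟨r, s⟩ ⟨hr, hs1, hs2⟩
    dsimp only at hr hs1 hs2
    exact ⟨s - r - 2, s, by omega, rfl⟩
  · -- InjOn
    rintro ⟨r, s⟩ ⟨hr, hs1, hs2⟩ ⟨r', s'⟩ ⟨hr', hs1', hs2'⟩ hEq
    dsimp only at hr hs1 hs2 hr' hs1' hs2' hEq
    obtain ⟨k, hk1, hk2⟩ := (orbPer_eq_iff g _ _ _ _).mp hEq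
    have hk0 : k = 0 := k_eq_zero hg hs1 hs2 hs1' hs2' hk2
    subst hk0
    simp only [zero_mul, add_zero] at hk1 hk2
    simp only [Prod.mk.injEq]
    omega
  · -- SurjOn
    rintro A ⟨i, j, hij, rfl⟩
    have he : (j - 1) % g = j - 1 - g * ((j - 1) / g) := Int.emod_def _ _
    have h1 : 0 ≤ (j - 1) % g := Int.emod_nonneg _ hg.ne'
    have h2 : (j - 1) % g < g := Int.emod_lt_of_pos _ hg
    refine ⟨(j - i - 2, (j - 1) % g + 1), ⟨by omega, by omega, by omega⟩, ?_⟩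
    have hmul : (-((j - 1) / g)) * g = -(g * ((j - 1) / g)) := by ring
    exact ((orbPer_eq_iff g i j _ _).mpr ⟨-((j - 1) / g), by dsimp only; linarith,
      by dsimp only; linarith⟩).symm
  · -- explicit formula
    intro i j s hij hs1 hs2 hdvd
    obtain ⟨m, hm⟩ := hdvd
    have hmul : (-m) * g = -(g * m) := by ring
    exact (orbPer_eq_iff g i j _ _).mpr ⟨-m, by linarith, by linarith⟩
  · -- move counts
    rintro ⟨r, s⟩ ⟨hr, hs1, hs2⟩ ⟨r', s'⟩ ⟨hr', hs1', hs2'⟩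
    dsimp only at hr hs1 hs2 hr' hs1' hs2' ⊢
    have key1 : (orbPer g (s' - r' - 2) s' = shiftFst (-1) (orbPer g (s - r - 2) s)) ↔
        (r' = r + 1 ∧ 0 ≤ r ∧ s' = s ∧ 1 ≤ s ∧ s ≤ g) := by
      rw [shiftFst_orbPer]
      constructor
      · intro hEq
        obtain ⟨k, hk1, hk2⟩ := (orbPer_eq_iff g _ _ _ _).mp hEq.symm
        have hk0 : k = 0 := k_eq_zero hg hs1 hs2 hs1' hs2' hk2
        subst hk0
        simp only [zero_mul, add_zero] at hk1 hk2
        refine ⟨by omega, hr, by omega, hs1, hs2⟩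
      · rintro ⟨h1, _, h2, _, _⟩
        exact (orbPer_eq_iff g _ _ _ _).mpr ⟨0, by omega, by omega⟩
    have key2 : (IsPerOut g (shiftSnd (-1) (orbPer g (s - r - 2) s)) ∧
        orbPer g (s' - r' - 2) s' = shiftSnd (-1) (orbPer g (s - r - 2) s)) ↔
        (r = r' + 1 ∧ 0 ≤ r' ∧ 1 ≤ s' ∧ s' ≤ g ∧
          s = (if s' < g then s' + 1 else 1)) := by
      rw [shiftSnd_orbPer]
      constructor
      · rintro ⟨⟨a, b, hab, hAB⟩, hEq⟩
        obtain ⟨k0, hk01, hk02⟩ := (orbPer_eq_iff g _ _ _ _).mp hAB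
        have hr1 : 1 ≤ r := by linarith
        obtain ⟨k, hk1, hk2⟩ := (orbPer_eq_iff g _ _ _ _).mp hEq.symm
        have hk' : s' = s - 1 + k * g := by linarith
        rcases k_zero_one hg hs1 hs2 hs1' hs2' hk' with rfl | rfl
        · simp only [zero_mul, add_zero] at hk1 hk2
          refine ⟨by omega, by omega, hs1', hs2', ?_⟩
          rw [if_pos (by omega)]; omega
        · simp only [one_mul] at hk1 hk2
          refine ⟨by omega, by omega, hs1', hs2', ?_⟩
          rw [if_neg (by omega)]; omega
      · rintro ⟨h1, h2, h3, h4, h5⟩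
        by_cases hc : s' < g
        · rw [if_pos hc] at h5
          exact ⟨⟨s - r - 2, s + -1, by omega, rfl⟩,
            (orbPer_eq_iff g _ _ _ _).mpr ⟨0, by omega, by omega⟩⟩
        · rw [if_neg hc] at h5
          have hs'g : s' = g := le_antisymm hs2' (not_lt.mp hc)
          refine ⟨⟨s - r - 2, s + -1, by omega, rfl⟩, ?_⟩
          exact ((orbPer_eq_iff g _ _ _ _).mpr ⟨1, by omega, by omega⟩).symm
    simp only [perOutMoveCount, q0Count, key1, key2]
end
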